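/- Let Q be the contact-rate matrix of the star on n > 1 nodes with hub 1, and let α ∈ (1/2,1] with (2α−1)n a positive integer and (2α−1)n < n. Then δ(Q,α) = (n/(2(n−1)))·(1 − √(1 − 4(2α−1)/n)), and this quantity is at least (2α−1)/n. -/

import Mathlib

open Matrix Finset Real

/-- The matrix `Q_S`. -/
noncomputable def QS {n : ℕ} (Q : Matrix (Fin n) (Fin n) ℝ) (S : Finset (Fin n)) :
    Matrix (Fin n) (Fin n) ℝ :=
  fun i j => if i = j then -(∑ l, Q i l) else if i ∈ S then 0 else Q i j

/-- The largest (real) eigenvalue of a matrix. -/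
noncomputable def lambdaMax {n : ℕ} (M : Matrix (Fin n) (Fin n) ℝ) : ℝ :=
  sSup {μ : ℝ | ∃ x : Fin n → ℝ, x ≠ 0 ∧ M.mulVec x = μ • x}

/-- The contact rate matrix of the star on `n` nodes with hub node `1` (index `0`). -/
noncomputable def Qstar (n : ℕ) : Matrix (Fin n) (Fin n) ℝ :=
  fun i j => if ((i : ℕ) = 0 ∧ (j : ℕ) ≠ 0) ∨ ((j : ℕ) = 0 ∧ (i : ℕ) ≠ 0)
    then 1 / ((n : ℝ) - 1) else 0

/-!
Write an eigenvalue of `Q_S` as `μ = -τ / (n - 1)`. The eigen-equation says that each leaf `i`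
satisfies `(1 - τ) xᵢ = x₀` (`= 0` if `i ∈ S`) and that the hub satisfies
`(τ - (n - 1)) x₀ + ∑ᵢ xᵢ = 0` (without the sum if the hub is in `S`). Eliminating the leaves,
a hub outside `S` forces `(τ² - nτ + k) x₀ = 0`, so the largest eigenvalue comes from the
smaller root `t = (n - √(n² - 4k)) / 2 ≤ 1` of `τ² - nτ + k`, while a hub inside `S` only allows
`τ ∈ {1, n - 1}`. Hence `|λ_{Q_S}|` is `1 / (n - 1)` or `t / (n - 1)`, and the minimum is
`t / (n - 1)`, the claimed value; finally `t (n - t) = k` gives `t ≥ k / n`.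
-/

lemma sum_erase_ite_mem_zero {ι : Type*} [Fintype ι] [DecidableEq ι] {S : Finset ι} {a : ι}
    (ha : a ∉ S) (c : ℝ) :
    ∑ j ∈ univ.erase a, (if j ∈ S then 0 else c) = ((Fintype.card ι : ℝ) - 1 - #S) * c := by
  have hsplit : ∀ j, (if j ∈ S then 0 else c) = c - if j ∈ S then c else 0 := fun j => by
    split_ifs <;> ring
  rw [sum_erase_eq_sub (mem_univ a), if_neg ha, Finset.sum_congr rfl fun j _ => hsplit j,
    sum_sub_distrib, sum_ite_mem, univ_inter]
  simp only [sum_const, card_univ, nsmul_eq_mul]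
  ring

lemma QS_mulVec_apply {n : ℕ} {Q : Matrix (Fin n) (Fin n) ℝ} (hQ : ∀ i, Q i i = 0)
    (S : Finset (Fin n)) (x : Fin n → ℝ) (i : Fin n) :
    (QS Q S *ᵥ x) i = -(∑ l, Q i l) * x i + if i ∈ S then 0 else (Q *ᵥ x) i := by
  have hoff : ∑ j ∈ univ.erase i, QS Q S i j * x j = if i ∈ S then 0 else (Q *ᵥ x) i := by
    rw [mulVec, dotProduct, ← add_sum_erase univ (fun j => Q i j * x j) (mem_univ i), hQ,
      zero_mul, zero_add]
    split_ifs with hi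
    · exact sum_eq_zero fun j hj => by simp [QS, (ne_of_mem_erase hj).symm, hi]
    · exact sum_congr rfl fun j hj => by simp [QS, (ne_of_mem_erase hj).symm, hi]
  rw [mulVec, dotProduct, ← add_sum_erase _ _ (mem_univ i), hoff]
  simp [QS]

section Star

variable {n : ℕ} [NeZero n]

lemma Qstar_apply (i j : Fin n) :
    Qstar n i j = if (i = 0 ∧ j ≠ 0) ∨ (j = 0 ∧ i ≠ 0) then 1 / ((n : ℝ) - 1) else 0 := by
  simp only [Qstar, ne_eq, Fin.val_eq_zero_iff]

lemma Qstar_apply_self (i : Fin n) : Qstar n i i = 0 := by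
  simp [Qstar_apply]

lemma Qstar_mulVec_zero (x : Fin n → ℝ) :
    (Qstar n *ᵥ x) 0 = (∑ j ∈ univ.erase 0, x j) / ((n : ℝ) - 1) := by
  rw [mulVec, dotProduct, ← add_sum_erase _ _ (mem_univ 0), Qstar_apply_self, zero_mul,
    zero_add, sum_div]
  exact sum_congr rfl fun j hj => by
    simp [Qstar_apply, ne_of_mem_erase hj, div_eq_inv_mul]

lemma Qstar_mulVec_of_ne_zero (x : Fin n → ℝ) {i : Fin n} (hi : i ≠ 0) :
    (Qstar n *ᵥ x) i = x 0 / ((n : ℝ) - 1) := by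
  rw [mulVec, dotProduct, Finset.sum_eq_single 0]
  · simp [Qstar_apply, hi, div_eq_inv_mul]
  · intro j _ hj
    simp [Qstar_apply, hi, hj]
  · simp

lemma QS_Qstar_mulVec_zero (hn : 2 ≤ n) (S : Finset (Fin n)) (x : Fin n → ℝ) :
    ((n : ℝ) - 1) * (QS (Qstar n) S *ᵥ x) 0
      = -((n : ℝ) - 1) * x 0 + if 0 ∈ S then 0 else ∑ j ∈ univ.erase 0, x j := by
  have hn1 : (n : ℝ) - 1 ≠ 0 := sub_ne_zero.2 (by exact_mod_cast (by omega : n ≠ 1))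
  have hrow : ∑ l, Qstar n 0 l = 1 := by
    have h := Qstar_mulVec_zero (n := n) 1
    simp only [mulVec, dotProduct, Pi.one_apply, mul_one] at h
    simpa [card_erase_of_mem, Nat.cast_pred (Nat.pos_of_neZero n), hn1] using h
  rw [QS_mulVec_apply Qstar_apply_self, Qstar_mulVec_zero, hrow, mul_add, mul_ite, mul_zero,
    mul_div_cancel₀ _ hn1]
  ring

lemma QS_Qstar_mulVec_of_ne_zero (hn : 2 ≤ n) (S : Finset (Fin n)) (x : Fin n → ℝ)
    {i : Fin n} (hi : i ≠ 0) :
    ((n : ℝ) - 1) * (QS (Qstar n) S *ᵥ x) i = -x i + if i ∈ S then 0 else x 0 := by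
  have hn1 : (n : ℝ) - 1 ≠ 0 := sub_ne_zero.2 (by exact_mod_cast (by omega : n ≠ 1))
  have hrow : ∑ l, Qstar n i l = 1 / ((n : ℝ) - 1) := by
    have h := Qstar_mulVec_of_ne_zero (n := n) 1 hi
    simp only [mulVec, dotProduct, Pi.one_apply, mul_one] at h
    simpa using h
  rw [QS_mulVec_apply Qstar_apply_self, Qstar_mulVec_of_ne_zero x hi, hrow, mul_add, mul_ite,
    mul_zero, mul_div_cancel₀ _ hn1]
  field_simp

lemma QS_Qstar_mulVec_eq_smul_iff (hn : 2 ≤ n) (S : Finset (Fin n)) (x : Fin n → ℝ) (τ : ℝ) :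
    QS (Qstar n) S *ᵥ x = (-τ / ((n : ℝ) - 1)) • x ↔
      (τ - ((n : ℝ) - 1)) * x 0 + (if 0 ∈ S then 0 else ∑ j ∈ univ.erase 0, x j) = 0 ∧
      ∀ i ≠ 0, (1 - τ) * x i = if i ∈ S then 0 else x 0 := by
  have hn1 : (n : ℝ) - 1 ≠ 0 := sub_ne_zero.2 (by exact_mod_cast (by omega : n ≠ 1))
  have hrow : ∀ i, (QS (Qstar n) S *ᵥ x) i = -τ / ((n : ℝ) - 1) * x i ↔
      ((n : ℝ) - 1) * (QS (Qstar n) S *ᵥ x) i = -τ * x i := fun i => by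
    rw [← mul_right_inj' hn1, ← mul_assoc, mul_div_cancel₀ _ hn1]
  simp only [funext_iff, Pi.smul_apply, smul_eq_mul, hrow]
  constructor
  · intro h
    refine ⟨?_, fun i hi => ?_⟩
    · linarith [QS_Qstar_mulVec_zero hn S x, h 0]
    · linarith [QS_Qstar_mulVec_of_ne_zero hn S x hi, h i]
  · rintro ⟨hhub, hleaf⟩ i
    by_cases hi : i = 0
    · subst hi
      linarith [QS_Qstar_mulVec_zero hn S x]
    · linarith [QS_Qstar_mulVec_of_ne_zero hn S x hi, hleaf i hi]

end Star

noncomputable def starRoot (n k : ℕ) : ℝ := (n - √((n : ℝ) ^ 2 - 4 * k)) / 2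

section StarRoot

variable {n k : ℕ}

lemma four_mul_le_sq (hkn : k < n) : 4 * (k : ℝ) ≤ (n : ℝ) ^ 2 := by
  have : (k : ℝ) + 1 ≤ n := by exact_mod_cast hkn
  nlinarith [sq_nonneg ((n : ℝ) - 2)]

lemma starRoot_sq_sub (hkn : k < n) : starRoot n k ^ 2 - n * starRoot n k + k = 0 := by
  have hs := Real.sq_sqrt (sub_nonneg.2 (four_mul_le_sq hkn))
  unfold starRoot
  linear_combination hs / 4

lemma starRoot_pos (hk : 0 < k) (hkn : k < n) : 0 < starRoot n k := by
  have hn : (0 : ℝ) < n := by exact_mod_cast hk.trans hkn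
  have hk' : (0 : ℝ) < k := by exact_mod_cast hk
  have : √((n : ℝ) ^ 2 - 4 * k) < n := (Real.sqrt_lt' hn).2 (by linarith)
  unfold starRoot
  linarith

lemma starRoot_le_one (hn : 2 ≤ n) (hkn : k < n) : starRoot n k ≤ 1 := by
  have hn' : (2 : ℝ) ≤ n := by exact_mod_cast hn
  have hkn' : (k : ℝ) + 1 ≤ n := by exact_mod_cast hkn
  have : (n : ℝ) - 2 ≤ √((n : ℝ) ^ 2 - 4 * k) :=
    (Real.le_sqrt (by linarith) (sub_nonneg.2 (four_mul_le_sq hkn))).2 (by nlinarith)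
  unfold starRoot
  linarith

end StarRoot

def realEigenvalues {n : ℕ} (M : Matrix (Fin n) (Fin n) ℝ) : Set ℝ :=
  {μ | ∃ x : Fin n → ℝ, x ≠ 0 ∧ M *ᵥ x = μ • x}

lemma lambdaMax_eq_sSup_realEigenvalues {n : ℕ} (M : Matrix (Fin n) (Fin n) ℝ) :
    lambdaMax M = sSup (realEigenvalues M) :=
  rfl

section Spectrum

variable {n k : ℕ} [NeZero n]

lemma le_neg_starRoot_div_of_mem_realEigenvalues (hn : 2 ≤ n) (hkn : k < n)
    {S : Finset (Fin n)} (hS : #S = k) {μ : ℝ} (hμ : μ ∈ realEigenvalues (QS (Qstar n) S)) :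
    μ ≤ -starRoot n k / ((n : ℝ) - 1) := by
  obtain ⟨x, hx, hMx⟩ := hμ
  have hn' : (2 : ℝ) ≤ n := by exact_mod_cast hn
  have hn1 : (n : ℝ) - 1 ≠ 0 := by linarith
  by_contra! hlt
  apply hx
  set t := starRoot n k
  set τ := -((n : ℝ) - 1) * μ
  rw [show μ = -τ / ((n : ℝ) - 1) by field_simp; ring,
    QS_Qstar_mulVec_eq_smul_iff hn] at hMx
  obtain ⟨hhub, hleaf⟩ := hMx
  have hτt : τ < t := by
    rw [div_lt_iff₀ (by linarith)] at hlt
    linarith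
  have ht1 : t ≤ 1 := starRoot_le_one hn hkn
  have hx0 : x 0 = 0 := by
    by_cases h0S : 0 ∈ S
    · rw [if_pos h0S, add_zero] at hhub
      exact (mul_eq_zero.1 hhub).resolve_left (by linarith)
    · rw [if_neg h0S] at hhub
      have hsum : (1 - τ) * ∑ j ∈ univ.erase 0, x j = ((n : ℝ) - 1 - k) * x 0 := by
        rw [mul_sum, sum_congr rfl fun j hj => hleaf j (ne_of_mem_erase hj),
          sum_erase_ite_mem_zero h0S, Fintype.card_fin, hS]
      -- `τ` lies below the smaller root `t` of `X ^ 2 - n X + k`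
      have hp : 0 < τ ^ 2 - n * τ + k := by
        nlinarith [starRoot_sq_sub hkn]
      have : (τ ^ 2 - n * τ + k) * x 0 = 0 := by
        linear_combination (τ - 1) * hhub + hsum
      exact (mul_eq_zero.1 this).resolve_left hp.ne'
  funext i
  by_cases hi : i = 0
  · rw [hi, hx0, Pi.zero_apply]
  · have := hleaf i hi
    rw [hx0, ite_self] at this
    exact (mul_eq_zero.1 this).resolve_left (by linarith)

lemma neg_one_div_mem_realEigenvalues_of_zero_mem (hn : 2 ≤ n) {S : Finset (Fin n)}
    (h0S : 0 ∈ S) : -1 / ((n : ℝ) - 1) ∈ realEigenvalues (QS (Qstar n) S) := by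
  have hj : (⟨1, hn⟩ : Fin n) ≠ 0 := by simp [Fin.ext_iff]
  refine ⟨Pi.single ⟨1, hn⟩ 1, by simp, (QS_Qstar_mulVec_eq_smul_iff hn S _ 1).2 ⟨?_, ?_⟩⟩
  · simp [h0S, hj.symm]
  · intro i _
    simp [hj.symm]

lemma neg_starRoot_div_mem_realEigenvalues (hn : 2 ≤ n) (hkn : k < n)
    {S : Finset (Fin n)} (hS : #S = k) (h0S : 0 ∉ S) :
    -starRoot n k / ((n : ℝ) - 1) ∈ realEigenvalues (QS (Qstar n) S) := by
  have hroot := starRoot_sq_sub hkn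
  have hn' : (2 : ℝ) ≤ n := by exact_mod_cast hn
  set t := starRoot n k
  rw [realEigenvalues, Set.mem_ofPred_eq]
  by_cases ht : t = 1
  · have hkn1 : k + 1 = n := by
      rw [ht] at hroot
      exact_mod_cast (by linarith : (k : ℝ) + 1 = n)
    have hleafS : ∀ i ≠ 0, i ∈ S := by
      have hsub : S ⊆ univ.erase 0 := fun j hj => mem_erase.2 ⟨fun h => h0S (h ▸ hj), mem_univ j⟩
      rw [eq_of_subset_of_card_le hsub (by simp [hS, ← hkn1])]
      exact fun i hi => mem_erase.2 ⟨hi, mem_univ i⟩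
    refine ⟨fun i => if i = 0 then (n : ℝ) - 1 else n - 2, fun h => ?_,
      (QS_Qstar_mulVec_eq_smul_iff hn S _ t).2 ⟨?_, fun i hi => ?_⟩⟩
    · have := congrFun h 0
      simp only [↓reduceIte, Pi.zero_apply] at this
      linarith
    · rw [sum_congr rfl fun j hj => if_neg (ne_of_mem_erase hj), sum_const,
        card_erase_of_mem (mem_univ 0), card_univ, Fintype.card_fin, nsmul_eq_mul,
        Nat.cast_pred (Nat.pos_of_neZero n), ht]
      simp only [h0S, ↓reduceIte]
      ring
    · rw [if_pos (hleafS i hi), ht]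
      ring
  · refine ⟨fun i => if i = 0 then 1 - t else if i ∈ S then 0 else 1, fun h => ?_,
      (QS_Qstar_mulVec_eq_smul_iff hn S _ t).2 ⟨?_, fun i hi => ?_⟩⟩
    · have := congrFun h 0
      simp only [↓reduceIte, Pi.zero_apply] at this
      exact ht (by linarith)
    · rw [sum_congr rfl fun j hj => if_neg (ne_of_mem_erase hj), sum_erase_ite_mem_zero h0S,
        Fintype.card_fin, hS]
      simp only [h0S, ↓reduceIte]
      linear_combination -hroot
    · simp only [if_neg hi, ↓reduceIte]
      split_ifs <;> ring

lemma lambdaMax_QS_Qstar_le (hn : 2 ≤ n) (hkn : k < n) {S : Finset (Fin n)} (hS : #S = k) :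
    lambdaMax (QS (Qstar n) S) ≤ -starRoot n k / ((n : ℝ) - 1) := by
  have hne : (realEigenvalues (QS (Qstar n) S)).Nonempty := by
    by_cases h0S : 0 ∈ S
    · exact ⟨_, neg_one_div_mem_realEigenvalues_of_zero_mem hn h0S⟩
    · exact ⟨_, neg_starRoot_div_mem_realEigenvalues hn hkn hS h0S⟩
  rw [lambdaMax_eq_sSup_realEigenvalues]
  exact csSup_le hne fun μ hμ => le_neg_starRoot_div_of_mem_realEigenvalues hn hkn hS hμ

lemma lambdaMax_QS_Qstar_of_zero_notMem (hn : 2 ≤ n) (hkn : k < n) {S : Finset (Fin n)}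
    (hS : #S = k) (h0S : 0 ∉ S) :
    lambdaMax (QS (Qstar n) S) = -starRoot n k / ((n : ℝ) - 1) := by
  refine (lambdaMax_QS_Qstar_le hn hkn hS).antisymm ?_
  rw [lambdaMax_eq_sSup_realEigenvalues]
  exact le_csSup ⟨_, fun _ hμ => le_neg_starRoot_div_of_mem_realEigenvalues hn hkn hS hμ⟩
    (neg_starRoot_div_mem_realEigenvalues hn hkn hS h0S)

lemma isLeast_abs_lambdaMax_QS_Qstar (hn : 2 ≤ n) (hk : 0 < k) (hkn : k < n) :
    IsLeast {x : ℝ | ∃ S : Finset (Fin n), #S = k ∧ x = |lambdaMax (QS (Qstar n) S)|}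
      (starRoot n k / ((n : ℝ) - 1)) := by
  have hn1 : (0 : ℝ) < n - 1 := by
    have : (2 : ℝ) ≤ n := by exact_mod_cast hn
    linarith
  refine ⟨?_, ?_⟩
  · obtain ⟨S, hsub, hS⟩ := exists_subset_card_eq (s := univ.erase (0 : Fin n)) (n := k)
      (by simp; omega)
    refine ⟨S, hS, ?_⟩
    rw [lambdaMax_QS_Qstar_of_zero_notMem hn hkn hS fun h => (mem_erase.1 (hsub h)).1 rfl,
      neg_div, abs_neg, abs_of_pos (div_pos (starRoot_pos hk hkn) hn1)]
  · rintro _ ⟨S, hS, rfl⟩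
    calc starRoot n k / ((n : ℝ) - 1) = -(-starRoot n k / ((n : ℝ) - 1)) := by ring
      _ ≤ -lambdaMax (QS (Qstar n) S) := neg_le_neg (lambdaMax_QS_Qstar_le hn hkn hS)
      _ ≤ |lambdaMax (QS (Qstar n) S)| := neg_le_abs _

end Spectrum

theorem stmt14_general (n : ℕ) (hn : 2 ≤ n) (α : ℝ)
    (k : ℕ) (hk : 0 < k) (hkn : k < n) (hkα : (k : ℝ) = (2*α - 1) * n) :
    sInf {x : ℝ | ∃ S : Finset (Fin n), S.card = k ∧ x = |lambdaMax (QS (Qstar n) S)|}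
      = ((n : ℝ) / (2 * ((n : ℝ) - 1))) * (1 - Real.sqrt (1 - 4 * (2*α - 1) / (n : ℝ))) ∧
    (2*α - 1) / (n : ℝ)
      ≤ ((n : ℝ) / (2 * ((n : ℝ) - 1))) * (1 - Real.sqrt (1 - 4 * (2*α - 1) / (n : ℝ))) := by
  have : NeZero n := ⟨by omega⟩
  have hn' : (2 : ℝ) ≤ n := by exact_mod_cast hn
  have hα' : 2 * α - 1 = k / n := by
    rw [hkα]
    field_simp
  have hδ : ((n : ℝ) / (2 * ((n : ℝ) - 1))) * (1 - √(1 - 4 * (2 * α - 1) / (n : ℝ)))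
      = starRoot n k / ((n : ℝ) - 1) := by
    have : 1 - 4 * (2 * α - 1) / (n : ℝ) = ((n : ℝ) ^ 2 - 4 * k) / (n : ℝ) ^ 2 := by
      rw [hα']
      field_simp
    rw [this, Real.sqrt_div' _ (sq_nonneg _), Real.sqrt_sq (by linarith), starRoot]
    field_simp
  rw [hδ]
  refine ⟨(isLeast_abs_lambdaMax_QS_Qstar hn hk hkn).csInf_eq, ?_⟩
  have hkt : (k : ℝ) / n ≤ starRoot n k := by
    rw [div_le_iff₀ (by linarith)]
    nlinarith [starRoot_sq_sub hkn, starRoot_pos hk hkn]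
  calc (2 * α - 1) / n = (k / n) / n := by rw [hα']
    _ ≤ starRoot n k / n := by gcongr
    _ ≤ starRoot n k / ((n : ℝ) - 1) := by
      gcongr
      · exact (starRoot_pos hk hkn).le
      · linarith
      · linarith

/-- For the star on `n > 1` nodes and `α ∈ (1/2,1]` with `(2α-1)n` a positive integer `< n`:
`δ(Q,α) = (n/(2(n-1)))(1 - √(1 - 4(2α-1)/n)) ≥ (2α-1)/n`. -/
theorem stmt14 (n : ℕ) (hn : 2 ≤ n) (α : ℝ) (hα : 1/2 < α) (hα1 : α ≤ 1)
    (k : ℕ) (hk : 0 < k) (hkn : k < n) (hkα : (k : ℝ) = (2*α - 1) * n) :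
    sInf {x : ℝ | ∃ S : Finset (Fin n), S.card = k ∧ x = |lambdaMax (QS (Qstar n) S)|}
      = ((n : ℝ) / (2 * ((n : ℝ) - 1))) * (1 - Real.sqrt (1 - 4 * (2*α - 1) / (n : ℝ))) ∧
    (2*α - 1) / (n : ℝ)
      ≤ ((n : ℝ) / (2 * ((n : ℝ) - 1))) * (1 - Real.sqrt (1 - 4 * (2*α - 1) / (n : ℝ))) :=
  stmt14_general n hn α k hk hkn hkα
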